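/- arXiv:2006.09877 — 2 statements merged into one kernel-verified Lean document; each statement's English description precedes it below -/
import Mathlib

section
/- For all finite nonempty simple graphs G and H, the twin-width of the strong product satisfies tww(G ⊠ H) ≤ max{ tww(G)·(Δ(H)+1) + 2Δ(H), tww(H) + Δ(H) }, where Δ(H) is the maximum degree of H. -/
/-- A trigraph: a finite vertex set with disjoint black and red edge sets. -/
structure Trigraph (V : Type*) where
  verts : Finset V
  black : V → V → Prop
  red : V → V → Prop
  black_symm : ∀ u v, black u v → black v u
  red_symm : ∀ u v, red u v → red v u
  black_irrefl : ∀ u, ¬ black u u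
  red_irrefl : ∀ u, ¬ red u u
  black_red_disjoint : ∀ u v, black u v → ¬ red u v
  black_mem : ∀ u v, black u v → u ∈ verts ∧ v ∈ verts
  red_mem : ∀ u v, red u v → u ∈ verts ∧ v ∈ verts

namespace Trigraph

variable {V : Type*} [DecidableEq V]

/-- The red degree of a vertex. -/
noncomputable def redDeg (G : Trigraph V) (x : V) : ℕ := {y | G.red x y}.ncard

/-- `G` is a `d`-trigraph: every vertex is incident to at most `d` red edges. -/
def RedDegLE (G : Trigraph V) (d : ℕ) : Prop := ∀ x, G.redDeg x ≤ d

/-- `G'` is obtained from `G` by contracting the two distinct vertices `u` and `v`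
(the contracted vertex is represented by `u`, and `v` is deleted). -/
def IsContractionAt (G G' : Trigraph V) (u v : V) : Prop :=
  u ∈ G.verts ∧ v ∈ G.verts ∧ u ≠ v ∧
  G'.verts = G.verts.erase v ∧
  (∀ x y, x ≠ u → y ≠ u → (G'.black x y ↔ (G.black x y ∧ x ≠ v ∧ y ≠ v))) ∧
  (∀ x y, x ≠ u → y ≠ u → (G'.red x y ↔ (G.red x y ∧ x ≠ v ∧ y ≠ v))) ∧
  (∀ x, x ≠ u → x ≠ v → (G'.black u x ↔ (G.black u x ∧ G.black v x))) ∧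
  (∀ x, x ≠ u → x ≠ v →
    (G'.red u x ↔
      ((G.black u x ∨ G.red u x ∨ G.black v x ∨ G.red v x) ∧ ¬ (G.black u x ∧ G.black v x))))

/-- `G'` is obtained from `G` by contracting some pair of vertices. -/
def IsContraction (G G' : Trigraph V) : Prop := ∃ u v, IsContractionAt G G' u v

/-- `G` admits a `d`-sequence: a sequence `G = G_n, …, G_1` of `d`-trigraphs, each obtained
from the previous one by a contraction, ending in a one-vertex trigraph. -/
def HasSeq (G : Trigraph V) (d : ℕ) : Prop :=
  ∃ f : ℕ → Trigraph V,
    f G.verts.card = G ∧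
    (∀ i, 1 ≤ i → i < G.verts.card → IsContraction (f (i + 1)) (f i)) ∧
    (∀ i, 1 ≤ i → i ≤ G.verts.card → (f i).RedDegLE d)

/-- The twin-width of a trigraph: the least `d` such that it admits a `d`-sequence. -/
noncomputable def tww (G : Trigraph V) : ℕ := sInf {d | G.HasSeq d}

end Trigraph

/-- The trigraph induced by a simple graph `G` on the vertex set `s`: all edges black. -/
def SimpleGraph.toTrigraphOn {V : Type*} (G : SimpleGraph V) (s : Finset V) : Trigraph V where
  verts := s
  black u v := G.Adj u v ∧ u ∈ s ∧ v ∈ s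
  red _ _ := False
  black_symm := fun _ _ ⟨h, hu, hv⟩ => ⟨h.symm, hv, hu⟩
  red_symm := fun _ _ h => h.elim
  black_irrefl := fun u h => G.loopless.irrefl u h.1
  red_irrefl := fun _ h => h
  black_red_disjoint := fun _ _ _ h => h
  black_mem := fun _ _ ⟨_, hu, hv⟩ => ⟨hu, hv⟩
  red_mem := fun _ _ h => h.elim

/-- The trigraph associated to a finite simple graph: all edges black. -/
def SimpleGraph.toTrigraph {V : Type*} [Fintype V] (G : SimpleGraph V) : Trigraph V :=
  G.toTrigraphOn Finset.univ

/-- The strong product of two simple graphs. -/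
def strongProd {V W : Type*} (G : SimpleGraph V) (H : SimpleGraph W) : SimpleGraph (V × W) where
  Adj a b := a ≠ b ∧ (a.1 = b.1 ∨ G.Adj a.1 b.1) ∧ (a.2 = b.2 ∨ H.Adj a.2 b.2)
  symm := by
    constructor
    rintro a b ⟨hne, h1, h2⟩
    exact ⟨hne.symm, h1.imp Eq.symm (fun h => h.symm), h2.imp Eq.symm (fun h => h.symm)⟩
  loopless := ⟨fun a h => h.1 rfl⟩

/-- The maximum degree of a finite simple graph. -/
noncomputable def maxDeg {W : Type*} [Fintype W] (H : SimpleGraph W) : ℕ :=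
  Finset.univ.sup fun v => {u | H.Adj v u}.ncard

/-!
A partition of the vertex set is encoded by a retraction whose fibres are the parts, and a
contraction sequence by a chain of retractions, each merging two parts of the previous one.

Given such chains for `G` and `H`, contract `G ⊠ H` by first replaying each step of `G` in every
column `V × {w}`, one column at a time, and then, once `G` is a single part, replaying the steps
of `H` on the remaining row. During the first phase every column is partitioned as `G` is just
before or just after the current step. So a part `(a, c)` has at most `tww G` red neighbours in
its own column, none in columns not adjacent to `c`, and at most `tww G + 2` in each of the at
most `Δ(H)` adjacent columns, whose partition differs from that of column `c` only at the two
merged parts. During the second phase the row is `H` contracted, except that black edges may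
turn red, because `V × A` and `V × B` are completely adjacent only when `G` is complete; this
costs at most `Δ(H)` more red edges.
-/

namespace Trigraph

theorem ext {V : Type*} {A B : Trigraph V} (hverts : A.verts = B.verts)
    (hblack : ∀ x y, A.black x y ↔ B.black x y) (hred : ∀ x y, A.red x y ↔ B.red x y) :
    A = B := by
  obtain ⟨_, _, _, _, _, _, _, _, _, _⟩ := A
  obtain ⟨_, _, _, _, _, _, _, _, _, _⟩ := B
  simp only [mk.injEq]
  exact ⟨hverts, funext₂ fun x y => propext (hblack x y), funext₂ fun x y => propext (hred x y)⟩

variable {V : Type*} [DecidableEq V]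

theorem rel_iff_of_agree {E E' : V → V → Prop} {u v : V}
    (hsymm : ∀ x y, E x y → E y x) (hsymm' : ∀ x y, E' x y → E' y x)
    (huu : ¬ E u u ∧ ¬ E' u u) (huv : ¬ E u v ∧ ¬ E' u v)
    (hat : ∀ y, y ≠ u → y ≠ v → (E u y ↔ E' u y))
    (hoff : ∀ x y, x ≠ u → y ≠ u → (E x y ↔ E' x y)) (x y : V) : E x y ↔ E' x y := by
  have hat' : ∀ y, E u y ↔ E' u y := fun y => by
    by_cases hyu : y = u
    · subst hyu; exact iff_of_false huu.1 huu.2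
    by_cases hyv : y = v
    · subst hyv; exact iff_of_false huv.1 huv.2
    exact hat y hyu hyv
  by_cases hx : x = u
  · subst hx; exact hat' y
  by_cases hy : y = u
  · subst hy
    exact ⟨fun h => hsymm' _ _ ((hat' x).1 (hsymm _ _ h)),
      fun h => hsymm _ _ ((hat' x).2 (hsymm' _ _ h))⟩
  exact hoff x y hx hy

theorem IsContractionAt.eq {A B B' : Trigraph V} {u v : V} (h : A.IsContractionAt B u v)
    (h' : A.IsContractionAt B' u v) : B = B' := by
  obtain ⟨-, -, -, hV, hb, hr, hbu, hru⟩ := h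
  obtain ⟨-, -, -, hV', hb', hr', hbu', hru'⟩ := h'
  have hv : v ∉ B.verts := by simp [hV]
  have hv' : v ∉ B'.verts := by simp [hV']
  refine ext (hV.trans hV'.symm) (rel_iff_of_agree B.black_symm B'.black_symm
    ⟨B.black_irrefl u, B'.black_irrefl u⟩
    ⟨fun h => hv (B.black_mem u v h).2, fun h => hv' (B'.black_mem u v h).2⟩
    (fun y hyu hyv => (hbu y hyu hyv).trans (hbu' y hyu hyv).symm)
    (fun x y hx hy => (hb x y hx hy).trans (hb' x y hx hy).symm))
    (rel_iff_of_agree B.red_symm B'.red_symm ⟨B.red_irrefl u, B'.red_irrefl u⟩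
    ⟨fun h => hv (B.red_mem u v h).2, fun h => hv' (B'.red_mem u v h).2⟩
    (fun y hyu hyv => (hru y hyu hyv).trans (hru' y hyu hyv).symm)
    (fun x y hx hy => (hr x y hx hy).trans (hr' x y hx hy).symm))

theorem IsContraction.card_verts {A B : Trigraph V} (h : A.IsContraction B) :
    B.verts.card + 1 = A.verts.card := by
  obtain ⟨u, v, -, hv, -, hV, -⟩ := h
  rw [hV, Finset.card_erase_add_one hv]

theorem hasSeq_of_reflTransGen {G T : Trigraph V} {d : ℕ}
    (hGT : Relation.ReflTransGen (fun A B => A.IsContraction B ∧ B.RedDegLE d) G T)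
    (hG : G.RedDegLE d) (hT : T.verts.card = 1) : G.HasSeq d := by
  suffices ∃ f : ℕ → Trigraph V, T.verts.card ≤ G.verts.card ∧ f G.verts.card = G ∧
      (∀ i, T.verts.card ≤ i → i < G.verts.card → IsContraction (f (i + 1)) (f i)) ∧
      (∀ i, T.verts.card ≤ i → i ≤ G.verts.card → (f i).RedDegLE d) by
    obtain ⟨f, -, hfG, hcon, hdeg⟩ := this
    exact ⟨f, hfG, fun i hi => hcon i (hT ▸ hi), fun i hi => hdeg i (hT ▸ hi)⟩
  clear hT
  induction hGT using Relation.ReflTransGen.head_induction_on with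
  | refl => exact ⟨fun _ => T, le_rfl, rfl, fun i h h' => absurd h' (by omega), fun _ _ _ => hG⟩
  | @head G G' hstep _ ih =>
    obtain ⟨f, hTG', hfG', hcon, hdeg⟩ := ih hstep.2
    have hcard := hstep.1.card_verts
    refine ⟨fun i => if i = G.verts.card then G else f i, by omega, by simp, ?_, ?_⟩
    · intro i hTi hiG
      by_cases hi : i + 1 = G.verts.card
      · obtain rfl : i = G'.verts.card := by omega
        simpa [hcard, hfG', show G'.verts.card ≠ G.verts.card by omega] using hstep.1
      · simpa [hi, show i ≠ G.verts.card by omega] using hcon i hTi (by omega)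
    · intro i hTi hiG
      by_cases hi : i = G.verts.card
      · simpa [hi] using hG
      · simpa [hi] using hdeg i hTi (by omega)

end Trigraph

section Classes

variable {X X' U : Type*} (R : X → X' → Prop)

def AllRel (p : X → U) (p' : X' → U) (x y : U) : Prop :=
  ∀ a b, p a = x → p' b = y → R a b

def SomeRel (p : X → U) (p' : X' → U) (x y : U) : Prop :=
  ∃ a b, p a = x ∧ p' b = y ∧ R a b

def MixedRel (p : X → U) (p' : X' → U) (x y : U) : Prop :=
  SomeRel R p p' x y ∧ ¬ AllRel R p p' x y

variable {R} {p₁ p₂ : X → U} {p₁' p₂' : X' → U} {x y : U}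

theorem allRel_congr (hx : ∀ a, p₁ a = x ↔ p₂ a = x) (hy : ∀ b, p₁' b = y ↔ p₂' b = y) :
    AllRel R p₁ p₁' x y ↔ AllRel R p₂ p₂' x y := by
  simp only [AllRel, hx, hy]

theorem someRel_congr (hx : ∀ a, p₁ a = x ↔ p₂ a = x) (hy : ∀ b, p₁' b = y ↔ p₂' b = y) :
    SomeRel R p₁ p₁' x y ↔ SomeRel R p₂ p₂' x y := by
  simp only [SomeRel, hx, hy]

theorem AllRel.someRel {R : U → U → Prop} {p p' : U → U} (h : AllRel R p p' x y)
    (hx : p x = x) (hy : p' y = y) : SomeRel R p p' x y :=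
  ⟨x, y, hx, hy, h x y hx hy⟩

end Classes

section Merge

variable {X X' U : Type*} [DecidableEq U]

def mergeClass (p : X → U) (u v : U) : X → U := fun a => if p a = v then u else p a

theorem mergeClass_eq_iff_of_ne {p : X → U} {u v y : U} (hyu : y ≠ u) (hyv : y ≠ v) (a : X) :
    mergeClass p u v a = y ↔ p a = y := by
  unfold mergeClass
  split_ifs with h <;> grind

theorem eq_iff_of_mergeClass {p ϖ ϖ' : X → U} {u v y : U} (hϖ : ϖ = p ∨ ϖ = mergeClass p u v)
    (hϖ' : ϖ' = p ∨ ϖ' = mergeClass p u v) (hyu : y ≠ u) (hyv : y ≠ v) (x : X) :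
    ϖ x = y ↔ ϖ' x = y := by
  rcases hϖ with rfl | rfl <;> rcases hϖ' with rfl | rfl <;>
    simp [mergeClass_eq_iff_of_ne hyu hyv]

theorem mergeClass_eq_left_iff {p : X → U} {u v : U} (a : X) :
    mergeClass p u v a = u ↔ p a = u ∨ p a = v := by
  unfold mergeClass
  split_ifs with h <;> simp [h]

theorem mergeClass_comp {Y : Type*} [DecidableEq Y] {f : U → Y} (hf : Function.Injective f)
    (p : X → U) (u v : U) : mergeClass (f ∘ p) (f u) (f v) = f ∘ mergeClass p u v := by
  funext a
  simp only [mergeClass, Function.comp_apply, hf.eq_iff]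
  split_ifs <;> rfl

theorem allRel_mergeClass_left {R : X → X' → Prop} {p : X → U} {p' : X' → U} {u v y : U} :
    AllRel R (mergeClass p u v) p' u y ↔ AllRel R p p' u y ∧ AllRel R p p' v y := by
  simp only [AllRel, mergeClass_eq_left_iff]
  grind

theorem someRel_mergeClass_left {R : X → X' → Prop} {p : X → U} {p' : X' → U} {u v y : U} :
    SomeRel R (mergeClass p u v) p' u y ↔ SomeRel R p p' u y ∨ SomeRel R p p' v y := by
  simp only [SomeRel, mergeClass_eq_left_iff]
  grind

variable {p : U → U} {u v : U}

theorem mergeClass_apply_eq_self_iff (hu : p u = u) (huv : u ≠ v) {x : U} :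
    mergeClass p u v x = x ↔ p x = x ∧ x ≠ v := by
  unfold mergeClass
  split_ifs with h <;> grind

theorem mergeClass_idem (hp : ∀ x, p (p x) = p x) (hu : p u = u) (huv : u ≠ v) (x : U) :
    mergeClass p u v (mergeClass p u v x) = mergeClass p u v x := by
  rw [mergeClass_apply_eq_self_iff hu huv]
  unfold mergeClass
  split_ifs with h
  · exact ⟨hu, huv⟩
  · exact ⟨hp x, h⟩

end Merge

namespace SimpleGraph

variable {U : Type*} [Fintype U] [DecidableEq U]

/-- A partition of `U` is encoded by a retraction `p`: the parts are the fibres of `p`, each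
represented by its fixed point. This is the trigraph obtained from `K` by contracting every part. -/
def quotientTrigraph (K : SimpleGraph U) (p : U → U) : Trigraph U where
  verts := Finset.univ.filter fun x => p x = x
  black x y := x ≠ y ∧ p x = x ∧ p y = y ∧ AllRel K.Adj p p x y
  red x y := x ≠ y ∧ p x = x ∧ p y = y ∧ MixedRel K.Adj p p x y
  black_symm _ _ := fun ⟨hne, hx, hy, hall⟩ =>
    ⟨hne.symm, hy, hx, fun a b ha hb => (hall b a hb ha).symm⟩
  red_symm _ _ := fun ⟨hne, hx, hy, ⟨a, b, ha, hb, hab⟩, hall⟩ =>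
    ⟨hne.symm, hy, hx, ⟨b, a, hb, ha, hab.symm⟩,
      fun h => hall fun a b ha hb => (h b a hb ha).symm⟩
  black_irrefl _ h := h.1 rfl
  red_irrefl _ h := h.1 rfl
  black_red_disjoint _ _ hb hr := hr.2.2.2.2 hb.2.2.2
  black_mem _ _ h := by simp [h.2.1, h.2.2.1]
  red_mem _ _ h := by simp [h.2.1, h.2.2.1]

variable (K : SimpleGraph U)

theorem quotientTrigraph_id : K.quotientTrigraph id = K.toTrigraph := by
  refine Trigraph.ext (by simp [quotientTrigraph, toTrigraph, toTrigraphOn]) (fun x y => ?_)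
    (fun x y => ?_)
  · simpa [quotientTrigraph, toTrigraph, toTrigraphOn, AllRel] using Adj.ne
  · simp [quotientTrigraph, toTrigraph, toTrigraphOn, MixedRel, AllRel, SomeRel]

theorem isContractionAt_quotientTrigraph_mergeClass {p : U → U} {u v : U} (hu : p u = u)
    (hv : p v = v) (huv : u ≠ v) :
    (K.quotientTrigraph p).IsContractionAt (K.quotientTrigraph (mergeClass p u v)) u v := by
  have hfix : ∀ x, mergeClass p u v x = x ↔ p x = x ∧ x ≠ v :=
    fun x => mergeClass_apply_eq_self_iff hu huv
  have hcls : ∀ x, x ≠ u → x ≠ v → ∀ a, mergeClass p u v a = x ↔ p a = x :=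
    fun x hxu hxv => mergeClass_eq_iff_of_ne hxu hxv
  refine ⟨by simp [quotientTrigraph, hu], by simp [quotientTrigraph, hv], huv, ?_, ?_, ?_, ?_, ?_⟩
  · ext x
    simp only [quotientTrigraph, Finset.mem_filter, Finset.mem_erase, hfix]
    tauto
  · intro x y hxu hyu
    simp only [quotientTrigraph, hfix]
    by_cases hxv : x = v
    · simp [hxv]
    by_cases hyv : y = v
    · simp [hyv]
    rw [allRel_congr (hcls x hxu hxv) (hcls y hyu hyv)]
    tauto
  · intro x y hxu hyu
    simp only [quotientTrigraph, MixedRel, hfix]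
    by_cases hxv : x = v
    · simp [hxv]
    by_cases hyv : y = v
    · simp [hyv]
    rw [allRel_congr (hcls x hxu hxv) (hcls y hyu hyv),
      someRel_congr (hcls x hxu hxv) (hcls y hyu hyv)]
    tauto
  · intro x hxu hxv
    simp only [quotientTrigraph, hfix]
    rw [allRel_congr (fun _ => Iff.rfl) (hcls x hxu hxv), allRel_mergeClass_left]
    grind
  · intro x hxu hxv
    simp only [quotientTrigraph, MixedRel, hfix]
    rw [allRel_congr (fun _ => Iff.rfl) (hcls x hxu hxv), allRel_mergeClass_left,
      someRel_congr (fun _ => Iff.rfl) (hcls x hxu hxv), someRel_mergeClass_left]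
    have hsu := fun (h : AllRel K.Adj p p u x) (hx : p x = x) => h.someRel hu hx
    have hsv := fun (h : AllRel K.Adj p p v x) (hx : p x = x) => h.someRel hv hx
    grind

/-- A contraction step between `d`-trigraphs, seen on the retractions encoding the partitions. -/
def MergeStep (d : ℕ) (p p' : U → U) : Prop :=
  (∃ u v, p u = u ∧ p v = v ∧ u ≠ v ∧ p' = mergeClass p u v) ∧
    (K.quotientTrigraph p).RedDegLE d ∧ (K.quotientTrigraph p').RedDegLE d

variable {K}

theorem reflTransGen_mergeStep_mono {d d' : ℕ} (hd : d ≤ d') {p p' : U → U}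
    (h : Relation.ReflTransGen (K.MergeStep d) p p') :
    Relation.ReflTransGen (K.MergeStep d') p p' :=
  Relation.ReflTransGen.mono
    (fun _ _ h => ⟨h.1, fun x => (h.2.1 x).trans hd, fun x => (h.2.2 x).trans hd⟩) _ _ h

theorem idem_of_reflTransGen_mergeStep {d : ℕ} {p : U → U}
    (h : Relation.ReflTransGen (K.MergeStep d) id p) (x : U) : p (p x) = p x := by
  induction h generalizing x with
  | refl => rfl
  | tail _ hstep ih =>
    obtain ⟨⟨u, v, hu, hv, huv, rfl⟩, -⟩ := hstep
    exact mergeClass_idem ih hu huv x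

theorem hasSeq_of_reflTransGen_mergeStep [Nonempty U] {d : ℕ} {p : U → U}
    (h : Relation.ReflTransGen (K.MergeStep d) id p) (hp : ∀ x y, p x = p y) :
    K.toTrigraph.HasSeq d := by
  refine Trigraph.hasSeq_of_reflTransGen (T := K.quotientTrigraph p) ?_
    (by simp [Trigraph.RedDegLE, Trigraph.redDeg, toTrigraph, toTrigraphOn]) ?_
  · rw [← quotientTrigraph_id]
    refine h.lift _ fun q q' ⟨⟨u, v, hu, hv, huv, hq'⟩, _, hdeg⟩ => ⟨⟨u, v, ?_⟩, hdeg⟩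
    exact hq' ▸ isContractionAt_quotientTrigraph_mergeClass K hu hv huv
  · obtain ⟨x₀⟩ := ‹Nonempty U›
    rw [Finset.card_eq_one]
    refine ⟨p x₀, Finset.ext fun x => ?_⟩
    simp only [quotientTrigraph, Finset.mem_filter, Finset.mem_univ, true_and,
      Finset.mem_singleton]
    exact ⟨fun hx => hx ▸ hp x x₀, fun hx => hx ▸ hp _ x₀⟩

theorem exists_reflTransGen_mergeStep_of_hasSeq [Nonempty U] {d : ℕ} (h : K.toTrigraph.HasSeq d) :
    ∃ p, Relation.ReflTransGen (K.MergeStep d) id p ∧ ∀ x y, p x = p y := by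
  obtain ⟨f, hfN, hcon, hdeg⟩ := h
  have hchain : ∀ i ≤ K.toTrigraph.verts.card, 1 ≤ i → ∃ p,
      Relation.ReflTransGen (K.MergeStep d) id p ∧ K.quotientTrigraph p = f i ∧
        (f i).verts.card = i := by
    refine fun i => Nat.decreasingInduction ?_ ?_
    · intro k hk ih hk1
      obtain ⟨p, hp, hpf, -⟩ := ih (by omega)
      obtain ⟨u, v, hat⟩ := hcon k hk1 hk
      have hcard := Trigraph.IsContraction.card_verts ⟨u, v, hat⟩
      rw [← hpf] at hat
      have hu : p u = u := by simpa [quotientTrigraph] using hat.1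
      have hv : p v = v := by simpa [quotientTrigraph] using hat.2.1
      have hmerge := (isContractionAt_quotientTrigraph_mergeClass K hu hv hat.2.2.1).eq hat
      refine ⟨mergeClass p u v, hp.tail ⟨⟨u, v, hu, hv, hat.2.2.1, rfl⟩, ?_, ?_⟩, hmerge, by omega⟩
      · exact hpf ▸ hdeg (k + 1) (by omega) hk
      · exact hmerge ▸ hdeg k hk1 hk.le
    · exact fun _ => ⟨id, .refl, (quotientTrigraph_id K).trans hfN.symm, by rw [hfN]⟩
  have hN : 1 ≤ K.toTrigraph.verts.card := by
    simp [toTrigraph, toTrigraphOn, Nat.one_le_iff_ne_zero]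
  obtain ⟨p, hp, hpf, hcard⟩ := hchain 1 hN le_rfl
  refine ⟨p, hp, fun x y => Finset.card_le_one.1 (hpf ▸ hcard).le _ ?_ _ ?_⟩ <;>
    simp [quotientTrigraph, idem_of_reflTransGen_mergeStep hp]

theorem hasSeq_card [Nonempty U] : K.toTrigraph.HasSeq (Fintype.card U) := by
  obtain ⟨z⟩ := ‹Nonempty U›
  have hdeg : ∀ p : U → U, (K.quotientTrigraph p).RedDegLE (Fintype.card U) :=
    fun p x => (Set.ncard_le_card _).trans_eq Nat.card_eq_fintype_card
  let collapse (S : Finset U) (x : U) : U := if x ∈ S then z else x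
  have hcollapse : ∀ S, Relation.ReflTransGen (K.MergeStep (Fintype.card U)) id (collapse S) := by
    intro S
    induction S using Finset.induction_on with
    | empty => exact .refl
    | @insert a S haS ih =>
      by_cases haz : a = z
      · convert ih using 1
        funext x
        by_cases hxz : x = z <;> simp [collapse, hxz, haz]
      refine ih.tail ⟨⟨z, a, by simp [collapse], by simp [collapse, haS], Ne.symm haz, ?_⟩,
        hdeg _, hdeg _⟩
      funext x
      by_cases hxa : x = a <;> by_cases hxS : x ∈ S <;> simp [collapse, mergeClass, hxa, hxS, haS]
  exact hasSeq_of_reflTransGen_mergeStep (hcollapse Finset.univ) (by simp [collapse])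

theorem hasSeq_tww [Nonempty U] : K.toTrigraph.HasSeq K.toTrigraph.tww :=
  Nat.sInf_mem (s := {d | K.toTrigraph.HasSeq d}) ⟨_, hasSeq_card⟩

end SimpleGraph

theorem Set.ncard_le_mul_of_fibers {B C : Type*} [Finite B] [Finite C] {T : Set C} {F : C → Set B}
    {k : ℕ} (hk : ∀ c ∈ T, (F c).ncard ≤ k) :
    {η : B × C | η.2 ∈ T ∧ η.1 ∈ F η.2}.ncard ≤ k * T.ncard := by
  classical
  have := Fintype.ofFinite B
  have := Fintype.ofFinite C
  rw [Set.ncard_eq_toFinset_card', Set.ncard_eq_toFinset_card' T]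
  refine Finset.card_le_mul_card_image_of_maps_to (f := Prod.snd) (by simp +contextual) k
    fun c hc => (hk c (by simpa using hc)).trans_eq' ?_
  have hfiber : F c = Prod.fst '' ((({η ∈ Set.toFinset {η : B × C | η.2 ∈ T ∧ η.1 ∈ F η.2} |
      η.2 = c}) : Finset (B × C)) : Set (B × C)) := by
    ext b
    simp_all
  rw [← Set.ncard_coe_finset, hfiber, Set.InjOn.ncard_image]
  rintro ⟨_, _⟩ h ⟨_, _⟩ h' rfl
  simp_all

theorem Set.ncard_le_add_of_subset_union {B : Type*} [Finite B] {S S₁ S₂ : Set B} {m n : ℕ}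
    (hS : S ⊆ S₁ ∪ S₂) (h₁ : S₁.ncard ≤ m) (h₂ : S₂.ncard ≤ n) : S.ncard ≤ m + n :=
  (Set.ncard_le_ncard hS).trans ((Set.ncard_union_le _ _).trans (add_le_add h₁ h₂))

theorem ncard_adj_le_maxDeg {W : Type*} [Fintype W] (H : SimpleGraph W) (c : W) :
    {w | H.Adj c w}.ncard ≤ maxDeg H :=
  Finset.le_sup (f := fun v => {u | H.Adj v u}.ncard) (Finset.mem_univ c)

section Columns

variable {V : Type*} [Fintype V] [DecidableEq V] {G : SimpleGraph V}

def SimpleGraph.ReflAdj (G : SimpleGraph V) (x x' : V) : Prop := x = x' ∨ G.Adj x x'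

theorem red_quotientTrigraph_of_classes {ϖ ϖ' τ : V → V} {a y : V}
    (ha : ∀ x, ϖ x = a ↔ τ x = a) (hy : ∀ x, ϖ' x = y ↔ τ x = y) (hτa : τ a = a)
    (hτy : τ y = y) (hay : a ≠ y) (h : MixedRel G.ReflAdj ϖ ϖ' a y) :
    (G.quotientTrigraph τ).red a y := by
  obtain ⟨hsome, hall⟩ := h
  rw [someRel_congr ha hy] at hsome
  rw [allRel_congr ha hy] at hall
  obtain ⟨x, x', hx, hx', hxx' | hadj⟩ := hsome
  · exact absurd (hx.symm.trans (hxx' ▸ hx')) hay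
  exact ⟨hay, hτa, hτy, ⟨x, x', hx, hx', hadj⟩,
    fun h => hall fun b b' hb hb' => .inr (h b b' hb hb')⟩

/-- The partitions `ϖ` and `ϖ'` have the same parts except those of `u` and `v`. So for `a ∈ {u, v}`
the red pairs are read off in `ϖ` up to the exceptions `u, v`, and otherwise in `ϖ'` up to the
exception `a`. -/
theorem ncard_mixedRel_reflAdj_le {p ϖ ϖ' : V → V} {u v a : V} {d : ℕ}
    (hϖ : ϖ = p ∨ ϖ = mergeClass p u v) (hϖ' : ϖ' = p ∨ ϖ' = mergeClass p u v)
    (hp : (G.quotientTrigraph p).RedDegLE d)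
    (hq : (G.quotientTrigraph (mergeClass p u v)).RedDegLE d) (ha : ϖ a = a) :
    {y | ϖ' y = y ∧ MixedRel G.ReflAdj ϖ ϖ' a y}.ncard ≤ d + 2 := by
  have hdeg : ∀ τ, (τ = p ∨ τ = mergeClass p u v) → (G.quotientTrigraph τ).RedDegLE d := by
    rintro τ (rfl | rfl)
    exacts [hp, hq]
  by_cases hauv : a = u ∨ a = v
  · refine Set.ncard_le_add_of_subset_union (S₂ := {u, v}) ?_ (hdeg ϖ hϖ a)
      ((Set.ncard_insert_le _ _).trans (by simp))
    rintro y ⟨hy, hmixed⟩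
    by_cases hyuv : y = u ∨ y = v
    · exact .inr hyuv
    rw [not_or] at hyuv
    have hcls := eq_iff_of_mergeClass hϖ' hϖ hyuv.1 hyuv.2
    exact .inl (red_quotientTrigraph_of_classes (fun _ => Iff.rfl) hcls ha ((hcls y).1 hy)
      (by grind) hmixed)
  · rw [not_or] at hauv
    refine Set.ncard_le_add_of_subset_union (S₂ := {a}) ?_ (hdeg ϖ' hϖ' a) (by simp)
    rintro y ⟨hy, hmixed⟩
    by_cases hya : y = a
    · exact .inr hya
    have hcls := eq_iff_of_mergeClass hϖ hϖ' hauv.1 hauv.2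
    exact .inl (red_quotientTrigraph_of_classes hcls (fun _ => Iff.rfl) ((hcls a).1 ha) hy
      (Ne.symm hya) hmixed)

end Columns

section Columnwise

variable {V W : Type*}

def columnwise (π : W → V → V) : V × W → V × W := fun η => (π η.2 η.1, η.2)

variable {π : W → V → V} {a y : V} {c c' : W}

theorem mixedRel_columnwise {R : V × W → V × W → Prop} :
    MixedRel R (columnwise π) (columnwise π) (a, c) (y, c') ↔
      MixedRel (fun x x' => R (x, c) (x', c')) (π c) (π c') a y := by
  have hsome : SomeRel R (columnwise π) (columnwise π) (a, c) (y, c') ↔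
      SomeRel (fun x x' => R (x, c) (x', c')) (π c) (π c') a y := by
    simp only [SomeRel, columnwise, Prod.mk.injEq, Prod.exists]
    grind
  have hall : AllRel R (columnwise π) (columnwise π) (a, c) (y, c') ↔
      AllRel (fun x x' => R (x, c) (x', c')) (π c) (π c') a y := by
    simp only [AllRel, columnwise, Prod.mk.injEq, Prod.forall]
    grind
  rw [MixedRel, MixedRel, hsome, hall]

variable [Fintype V] [Fintype W] [DecidableEq V] [DecidableEq W]
variable {G : SimpleGraph V} {H : SimpleGraph W}

theorem red_columnwise_same_column
    (h : ((strongProd G H).quotientTrigraph (columnwise π)).red (a, c) (y, c)) :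
    (G.quotientTrigraph (π c)).red a y := by
  have hadj : (fun x x' => (strongProd G H).Adj (x, c) (x', c)) = G.Adj := by
    ext x x'
    simp only [strongProd, ne_eq, Prod.mk.injEq, and_true, true_or]
    exact ⟨fun h => h.2.resolve_left h.1, fun h => ⟨h.ne, .inr h⟩⟩
  obtain ⟨hne, ha, hy, hmixed⟩ := h
  rw [mixedRel_columnwise, hadj] at hmixed
  exact ⟨by simpa using hne, by simpa [columnwise] using ha, by simpa [columnwise] using hy,
    hmixed⟩

theorem red_columnwise_of_ne (hcc : c ≠ c')
    (h : ((strongProd G H).quotientTrigraph (columnwise π)).red (a, c) (y, c')) :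
    H.Adj c c' ∧ π c' y = y ∧ MixedRel G.ReflAdj (π c) (π c') a y := by
  have hadj : (fun x x' => (strongProd G H).Adj (x, c) (x', c')) =
      fun x x' => H.Adj c c' ∧ G.ReflAdj x x' := by
    ext x x'
    simp [strongProd, SimpleGraph.ReflAdj, hcc]
    tauto
  obtain ⟨-, -, hy, hmixed⟩ := h
  rw [mixedRel_columnwise, hadj] at hmixed
  obtain ⟨⟨x, x', hx, hx', hH, hR⟩, hall⟩ := hmixed
  exact ⟨hH, by simpa [columnwise] using hy, ⟨x, x', hx, hx', hR⟩,
    fun h => hall fun b b' hb hb' => ⟨hH, h b b' hb hb'⟩⟩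

theorem redDegLE_columnwise {p : V → V} {u v : V} {d : ℕ}
    (hπ : ∀ w, π w = p ∨ π w = mergeClass p u v) (hp : (G.quotientTrigraph p).RedDegLE d)
    (hq : (G.quotientTrigraph (mergeClass p u v)).RedDegLE d) :
    ((strongProd G H).quotientTrigraph (columnwise π)).RedDegLE
      (d * (maxDeg H + 1) + 2 * maxDeg H) := by
  rintro ⟨a, c⟩
  by_cases ha : π c a = a
  swap
  · simp [Trigraph.redDeg, SimpleGraph.quotientTrigraph, columnwise, ha]
  have hsame : {y | (G.quotientTrigraph (π c)).red a y}.ncard ≤ d := by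
    rcases hπ c with h | h <;> rw [h] <;> apply_assumption
  let mixed (c' : W) : Set V := {y | π c' y = y ∧ MixedRel G.ReflAdj (π c) (π c') a y}
  have hmixed : ∀ c', (mixed c').ncard ≤ d + 2 :=
    fun c' => ncard_mixedRel_reflAdj_le (hπ c) (hπ c') hp hq ha
  refine (Set.ncard_le_add_of_subset_union ?_
    (Set.ncard_le_mul_of_fibers (T := {c}) fun _ _ => hsame)
    (Set.ncard_le_mul_of_fibers (T := {w | H.Adj c w}) fun c' _ => hmixed c')).trans ?_
  · rintro ⟨y, c'⟩ h
    by_cases hcc : c' = c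
    · subst hcc
      exact .inl ⟨rfl, red_columnwise_same_column h⟩
    · exact .inr (red_columnwise_of_ne (Ne.symm hcc) h)
  · have := Nat.mul_le_mul_left (d + 2) (ncard_adj_le_maxDeg H c)
    rw [Set.ncard_singleton]
    linarith

end Columnwise

section Chains

variable {V W : Type*} [Fintype V] [Fintype W] [DecidableEq V] [DecidableEq W]
variable {G : SimpleGraph V} {H : SimpleGraph W}

theorem redDegLE_rowwise (z : V) {ρ : W → W} {d : ℕ}
    (hρ : (H.quotientTrigraph ρ).RedDegLE d) :
    ((strongProd G H).quotientTrigraph fun η => (z, ρ η.2)).RedDegLE (d + maxDeg H) := by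
  rintro ⟨x, c⟩
  refine (Set.ncard_le_ncard (t := Prod.mk z ''
    ({b | (H.quotientTrigraph ρ).red c b} ∪ {b | H.Adj c b})) ?_).trans ?_
  · rintro ⟨y, b⟩ ⟨hne, hx, hy, ⟨α, β, hα, hβ, hadj⟩, -⟩
    simp only [Prod.mk.injEq] at hx hy hα hβ
    obtain ⟨rfl, hc⟩ := hx
    obtain ⟨rfl, hb⟩ := hy
    have hcb : c ≠ b := fun h => hne (h ▸ rfl)
    refine ⟨b, ?_, rfl⟩
    by_cases hall : AllRel H.Adj ρ ρ c b
    · exact .inr (hall c b hc hb)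
    have hαβ : H.Adj α.2 β.2 :=
      hadj.2.2.resolve_left fun h => hcb (hα.2 ▸ hβ.2 ▸ congrArg ρ h)
    exact .inl ⟨hcb, hc, hb, ⟨_, _, hα.2, hβ.2, hαβ⟩, hall⟩
  · rw [Set.ncard_image_of_injective _ (Prod.mk_right_injective z)]
    exact (Set.ncard_union_le _ _).trans (add_le_add (hρ c) (ncard_adj_le_maxDeg H c))

theorem reflTransGen_mergeStep_rowwise (z : V) {d : ℕ} {ρ ρ' : W → W}
    (h : Relation.ReflTransGen (H.MergeStep d) ρ ρ') :
    Relation.ReflTransGen ((strongProd G H).MergeStep (d + maxDeg H))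
      (fun η => (z, ρ η.2)) (fun η => (z, ρ' η.2)) := by
  refine h.lift (fun r (η : V × W) => (z, r η.2)) fun r _ ⟨⟨u, v, hu, hv, huv, hr'⟩, hr, hrr'⟩ => ?_
  subst hr'
  exact ⟨⟨(z, u), (z, v), by simp [hu], by simp [hv], by simp [huv],
    (mergeClass_comp (Prod.mk_right_injective z) (r ∘ Prod.snd) u v).symm⟩,
    redDegLE_rowwise z hr, redDegLE_rowwise z hrr'⟩

theorem reflTransGen_mergeStep_columnwise_of_mergeStep {d : ℕ} {p p' : V → V}
    (h : G.MergeStep d p p') :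
    Relation.ReflTransGen ((strongProd G H).MergeStep (d * (maxDeg H + 1) + 2 * maxDeg H))
      (columnwise fun _ => p) (columnwise fun _ => p') := by
  obtain ⟨⟨u, v, hu, hv, huv, rfl⟩, hp, hq⟩ := h
  let π (S : Finset W) (w : W) : V → V := if w ∈ S then mergeClass p u v else p
  have hπ : ∀ S w, π S w = p ∨ π S w = mergeClass p u v := fun S w => by
    by_cases hw : w ∈ S <;> simp [π, hw]
  have hcolumns : ∀ S, Relation.ReflTransGen ((strongProd G H).MergeStep
      (d * (maxDeg H + 1) + 2 * maxDeg H)) (columnwise (π ∅)) (columnwise (π S)) := by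
    intro S
    induction S using Finset.induction_on with
    | empty => exact .refl
    | @insert w S hwS ih =>
      refine ih.tail ⟨⟨(u, w), (v, w), by simp [columnwise, π, hwS, hu],
        by simp [columnwise, π, hwS, hv], by simp [huv], ?_⟩,
        redDegLE_columnwise (hπ S) hp hq, redDegLE_columnwise (hπ _) hp hq⟩
      funext ⟨x, w'⟩
      by_cases hw' : w' = w
      · subst hw'
        simp only [columnwise, π, mergeClass, Finset.mem_insert, true_or, if_true, hwS,
          if_false, Prod.mk.injEq, and_true]
        split_ifs <;> rfl
      · simp [columnwise, π, mergeClass, hw']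
  simpa [π] using hcolumns Finset.univ

theorem reflTransGen_mergeStep_columnwise {d : ℕ} {p p' : V → V}
    (h : Relation.ReflTransGen (G.MergeStep d) p p') :
    Relation.ReflTransGen ((strongProd G H).MergeStep (d * (maxDeg H + 1) + 2 * maxDeg H))
      (columnwise fun _ => p) (columnwise fun _ => p') :=
  h.lift' (fun p => columnwise fun _ => p) fun _ _ => reflTransGen_mergeStep_columnwise_of_mergeStep

end Chains

/-- `tww(G ⊠ H) ≤ max (tww(G)·(Δ(H)+1) + 2Δ(H)) (tww(H) + Δ(H))`. -/
theorem twin_width_strong_product {V W : Type*} [Fintype V] [Fintype W]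
    [DecidableEq V] [DecidableEq W] [Nonempty V] [Nonempty W]
    (G : SimpleGraph V) (H : SimpleGraph W) :
    Trigraph.tww (strongProd G H).toTrigraph ≤
      max (Trigraph.tww G.toTrigraph * (maxDeg H + 1) + 2 * maxDeg H)
          (Trigraph.tww H.toTrigraph + maxDeg H) := by
  obtain ⟨pG, hpG, hpG_const⟩ := G.exists_reflTransGen_mergeStep_of_hasSeq G.hasSeq_tww
  obtain ⟨pH, hpH, hpH_const⟩ := H.exists_reflTransGen_mergeStep_of_hasSeq H.hasSeq_tww
  obtain ⟨x₀⟩ := ‹Nonempty V›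
  obtain ⟨w₀⟩ := ‹Nonempty W›
  have hcollapsed : (columnwise fun _ => pG) = fun η : V × W => (pG x₀, id η.2) := by
    funext η
    simp [columnwise, hpG_const η.1 x₀]
  have phase₁ := reflTransGen_mergeStep_columnwise (H := H) hpG
  have phase₂ := reflTransGen_mergeStep_rowwise (G := G) (pG x₀) hpH
  rw [hcollapsed] at phase₁
  refine Nat.sInf_le (SimpleGraph.hasSeq_of_reflTransGen_mergeStep
    ((SimpleGraph.reflTransGen_mergeStep_mono (le_max_left _ _) phase₁).trans
      (SimpleGraph.reflTransGen_mergeStep_mono (le_max_right _ _) phase₂)) ?_)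
  simp [hpH_const _ w₀]
end

section
/- For all integers d ≥ 0, k ≥ 1 and n ≥ 2: if the k-subdivision K_n^{(k)} of the complete graph K_n has twin-width at most d, then (d+1)^{k+1} ≥ n − 1 (equivalently, k ≥ log_{d+1}(n−1) − 1 when d ≥ 1). -/
/-- Vertices of the k-subdivision of K_n. -/
def SubdivVert (n k : ℕ) : Type :=
  Fin n ⊕ ({ p : Fin n × Fin n // p.1 < p.2 } × Fin k)

instance (n k : ℕ) : Fintype (SubdivVert n k) :=
  inferInstanceAs (Fintype (Fin n ⊕ ({ p : Fin n × Fin n // p.1 < p.2 } × Fin k)))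

instance (n k : ℕ) : DecidableEq (SubdivVert n k) :=
  inferInstanceAs (DecidableEq (Fin n ⊕ ({ p : Fin n × Fin n // p.1 < p.2 } × Fin k)))

def subAdj (n k : ℕ) : SubdivVert n k → SubdivVert n k → Prop
  | Sum.inl a, Sum.inl b => k = 0 ∧ a ≠ b
  | Sum.inl a, Sum.inr (e, m) => (a = e.1.1 ∧ (m : ℕ) = 0) ∨ (a = e.1.2 ∧ (m : ℕ) = k - 1)
  | Sum.inr (e, m), Sum.inl a => (a = e.1.1 ∧ (m : ℕ) = 0) ∨ (a = e.1.2 ∧ (m : ℕ) = k - 1)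
  | Sum.inr (e, m), Sum.inr (e', m') =>
      e = e' ∧ ((m : ℕ) + 1 = (m' : ℕ) ∨ (m' : ℕ) + 1 = (m : ℕ))

/-- The k-subdivision of the complete graph K_n. -/
def cliqueSubdivision (n k : ℕ) : SimpleGraph (SubdivVert n k) where
  Adj := subAdj n k
  symm := by
    constructor
    rintro (a | ⟨e, m⟩) (b | ⟨e', m'⟩) h <;> simp only [subAdj] at h ⊢
    · exact ⟨h.1, h.2.symm⟩
    · exact h
    · exact h
    · exact ⟨h.1.symm, h.2.symm⟩
  loopless := by
    constructor
    rintro (a | ⟨e, m⟩) h <;> simp only [subAdj] at h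
    · exact h.2 rfl
    · omega

/-!
Fix a `d`-sequence of `K_n^{(k)}` and the first contraction after which some branch vertex `a`
shares its part `X` with another vertex. Just before it every branch vertex was alone in its
part, so the branch vertices other than `a` still lie in `n - 1` distinct parts.

For `c ≠ a` let `a = x₀(c), x₁(c), …, x_{k+1}(c) = c` be the path subdividing the edge `ac`. If
the paths of `c ≠ c'` meet in a part at step `j`, then `x_{j+1}(c)` is adjacent to `x_j(c)` but
not to `x_j(c')`, so its part is that part or a red neighbour of it: from one step to the next
the number of parts met grows by a factor at most `d + 1`. At step `1`, `x₁(c)` is adjacent to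
`a ∈ X` and its only other neighbour is `x₂(c)`, so as soon as `X` contains a third vertex, the
part of `x₁(c)` is `X` or one of its at most `d` red neighbours. This fails only if
`X = {a, x₂(c₀)}` for a single `c₀`, and then the parts of the `x₁(c)`, `c ≠ a, c₀`, are all red
neighbours of `X`. Either way `n - 1 ≤ (d + 1) ^ (k + 1)`.
-/

namespace Trigraph

variable {V : Type*}

theorem redDegLE_card [Fintype V] (T : Trigraph V) : T.RedDegLE (Fintype.card V) := fun _ =>
  (Set.ncard_le_ncard (Set.subset_univ _)).trans_eq
    (by rw [Set.ncard_univ, Nat.card_eq_fintype_card])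

theorem RedDegLE.card_le_of_forall_red {T : Trigraph V} {d : ℕ} (hT : T.RedDegLE d) {x : V}
    {F : Finset V} (hF : ∀ y ∈ F, T.red x y) : F.card ≤ d := by
  rw [← Set.ncard_coe_finset]
  refine (Set.ncard_le_ncard (t := {y | T.red x y}) hF ?_).trans (hT x)
  exact T.verts.finite_toSet.subset fun y hy => (T.red_mem x y hy).2

section Sequences

variable [DecidableEq V]

def contract (G : Trigraph V) (u v : V) (hu : u ∈ G.verts) (huv : u ≠ v) : Trigraph V where
  verts := G.verts.erase v
  black x y := (x ≠ u ∧ y ≠ u ∧ G.black x y ∧ x ≠ v ∧ y ≠ v) ∨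
    (x = u ∧ y ≠ u ∧ y ≠ v ∧ G.black u y ∧ G.black v y) ∨
    (y = u ∧ x ≠ u ∧ x ≠ v ∧ G.black u x ∧ G.black v x)
  red x y := (x ≠ u ∧ y ≠ u ∧ G.red x y ∧ x ≠ v ∧ y ≠ v) ∨
    (x = u ∧ y ≠ u ∧ y ≠ v ∧
      ((G.black u y ∨ G.red u y ∨ G.black v y ∨ G.red v y) ∧ ¬ (G.black u y ∧ G.black v y))) ∨
    (y = u ∧ x ≠ u ∧ x ≠ v ∧
      ((G.black u x ∨ G.red u x ∨ G.black v x ∨ G.red v x) ∧ ¬ (G.black u x ∧ G.black v x)))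
  black_symm x y := by have := G.black_symm x y; grind
  red_symm x y := by have := G.red_symm x y; grind
  black_irrefl x := by have := G.black_irrefl x; grind
  red_irrefl x := by have := G.red_irrefl x; grind
  black_red_disjoint x y := by have := G.black_red_disjoint x y; grind
  black_mem x y := by
    have := G.black_mem x y; have := G.black_mem u y; have := G.black_mem u x
    simp only [Finset.mem_erase]; grind
  red_mem x y := by
    have := G.red_mem x y; have := G.black_mem u y; have := G.black_mem u x
    have := G.red_mem u y; have := G.red_mem u x; have := G.black_mem v y
    have := G.black_mem v x; have := G.red_mem v y; have := G.red_mem v x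
    simp only [Finset.mem_erase]; grind

theorem isContractionAt_contract (G : Trigraph V) {u v : V} (hu : u ∈ G.verts)
    (hv : v ∈ G.verts) (huv : u ≠ v) : IsContractionAt G (G.contract u v hu huv) u v := by
  refine ⟨hu, hv, huv, rfl, ?_, ?_, ?_, ?_⟩ <;> simp only [contract] <;> grind

theorem HasSeq.mono {G : Trigraph V} {d d' : ℕ} (h : G.HasSeq d) (hd : d ≤ d') : G.HasSeq d' :=
  let ⟨f, hG, hc, hr⟩ := h
  ⟨f, hG, hc, fun i h₁ h₂ x => (hr i h₁ h₂ x).trans hd⟩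

theorem hasSeq_card [Fintype V] (G : Trigraph V) : G.HasSeq (Fintype.card V) := by
  induction hN : G.verts.card generalizing G with
  | zero => exact ⟨fun _ => G, hN ▸ rfl, by omega, by omega⟩
  | succ N ih =>
    rcases Nat.eq_zero_or_pos N with rfl | hN₀
    · exact ⟨fun _ => G, rfl, by omega, fun _ _ _ => G.redDegLE_card⟩
    obtain ⟨u, hu, v, hv, huv⟩ := Finset.one_lt_card.mp (by omega : 1 < G.verts.card)
    have hc := G.isContractionAt_contract hu hv huv
    have hcard : (G.contract u v hu huv).verts.card = N := by
      rw [hc.2.2.2.1, Finset.card_erase_of_mem hv]; omega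
    obtain ⟨f, hf, hfc, -⟩ := ih _ hcard
    rw [hcard] at hf hfc
    refine ⟨Function.update f (N + 1) G, by simp [hN], fun i h₁ h₂ => ?_,
      fun _ _ _ => redDegLE_card _⟩
    rcases Nat.lt_or_ge i N with hi | hi
    · simpa [Function.update_of_ne (by omega : i + 1 ≠ N + 1),
        Function.update_of_ne (by omega : i ≠ N + 1)] using hfc i h₁ hi
    · obtain rfl : i = N := by omega
      rw [Function.update_self, Function.update_of_ne (by omega), hf]
      exact ⟨u, v, hc⟩

/-- `tww` is an `sInf`, hence `0` if no `d`-sequence existed; `hasSeq_card` rules this out. -/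
theorem HasSeq.of_tww_le [Fintype V] {G : Trigraph V} {d : ℕ} (h : G.tww ≤ d) : G.HasSeq d :=
  HasSeq.mono (Nat.sInf_mem (s := {d | G.HasSeq d}) ⟨_, G.hasSeq_card⟩) h

end Sequences

/-- `T` is a quotient of `H` in which `π` sends each vertex of `H` to the vertex of `T` whose
part contains it: two distinct parts not joined by a red edge are completely joined in `H` if
they are joined by a black edge, and not joined at all otherwise. -/
structure Represents {W : Type*} (T : Trigraph V) (H : SimpleGraph W) (π : W → V) : Prop where
  mem_verts : ∀ p, π p ∈ T.verts
  adj_iff_black : ∀ p q, π p ≠ π q → ¬ T.red (π p) (π q) → (H.Adj p q ↔ T.black (π p) (π q))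

theorem represents_toTrigraph [Fintype V] (H : SimpleGraph V) :
    H.toTrigraph.Represents H id :=
  ⟨Finset.mem_univ, fun _ _ _ _ => by simp [SimpleGraph.toTrigraph, SimpleGraph.toTrigraphOn]⟩

theorem Represents.red_of_adj_of_not_adj {W : Type*} {T : Trigraph V} {H : SimpleGraph W}
    {π : W → V} (hT : T.Represents H π) {p q p' q' : W} (hp : π p' = π p) (hq : π q' = π q)
    (hpq : π p ≠ π q) (hadj : H.Adj p q) (hnadj : ¬ H.Adj p' q') : T.red (π p) (π q) := by
  by_contra hr
  rw [hT.adj_iff_black p q hpq hr, ← hp, ← hq] at hadj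
  rw [← hp, ← hq] at hpq hr
  exact hnadj ((hT.adj_iff_black p' q' hpq hr).2 hadj)

section Contraction

variable [DecidableEq V]

def contractMap (u v : V) (x : V) : V := if x = v then u else x

theorem contractMap_eq_contractMap_iff {u v x y : V} :
    contractMap u v x = contractMap u v y ↔ x = y ∨ ((x = u ∨ x = v) ∧ (y = u ∨ y = v)) := by
  unfold contractMap; grind

theorem IsContractionAt.not_red_and_black_iff {G G' : Trigraph V} {u v x y : V}
    (hc : G.IsContractionAt G' u v) (hx : x = u ∨ x = v) (hyu : y ≠ u) (hyv : y ≠ v)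
    (hr : ¬ G'.red u y) : ¬ G.red x y ∧ (G.black x y ↔ G'.black u y) := by
  obtain ⟨-, -, -, -, -, -, hb, hr'⟩ := hc
  have := G.black_red_disjoint x y
  grind

theorem Represents.contract {W : Type*} {G G' : Trigraph V} {H : SimpleGraph W} {π : W → V}
    {u v : V} (hG : G.Represents H π) (hc : G.IsContractionAt G' u v) :
    G'.Represents H (contractMap u v ∘ π) := by
  have hmap : ∀ x, contractMap u v x = u ∨ (contractMap u v x = x ∧ x ≠ u ∧ x ≠ v) := by
    unfold contractMap; grind
  have merged : ∀ p q, contractMap u v (π p) = u → contractMap u v (π q) ≠ u →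
      ¬ G'.red u (contractMap u v (π q)) → (H.Adj p q ↔ G'.black u (contractMap u v (π q))) := by
    intro p q hp hq hnr
    obtain ⟨hq', hqu, hqv⟩ := (hmap _).resolve_left hq
    have hpuv : π p = u ∨ π p = v := by unfold contractMap at hp; grind
    rw [hq'] at hnr ⊢
    obtain ⟨hnr, hblack⟩ := hc.not_red_and_black_iff hpuv hqu hqv hnr
    rw [hG.adj_iff_black p q (by grind) hnr, hblack]
  obtain ⟨hu, -, huv, hverts, hb, hr, -, -⟩ := hc
  refine ⟨fun p => ?_, fun p q hne hnr => ?_⟩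
  · rw [Function.comp_apply, hverts, Finset.mem_erase]
    rcases hmap (π p) with h | ⟨h, -, hv⟩ <;> rw [h]
    exacts [⟨huv, hu⟩, ⟨hv, hG.mem_verts p⟩]
  simp only [Function.comp_apply] at hne hnr ⊢
  rcases hmap (π p) with hp | ⟨hp, hpu, hpv⟩
  · rw [hp] at hne hnr ⊢
    exact merged p q hp (Ne.symm (hp ▸ hne)) hnr
  rcases hmap (π q) with hq | ⟨hq, hqu, hqv⟩
  · rw [H.adj_comm, merged q p hq (fun h => hne (h.trans hq.symm))
      (fun h => hnr (by rw [hq]; exact G'.red_symm _ _ h)), hq]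
    exact ⟨G'.black_symm _ _, G'.black_symm _ _⟩
  rw [hp, hq] at hne hnr ⊢
  rw [hr _ _ hpu hqu] at hnr
  rw [hG.adj_iff_black p q hne (by tauto), hb _ _ hpu hqu]
  tauto

theorem HasSeq.exists_critical_contraction [Fintype V] {H : SimpleGraph V} {d : ℕ}
    (hH : H.toTrigraph.HasSeq d) (P : (V → V) → Prop) (h_id : P id)
    (h_const : ∀ π : V → V, (∀ p q, π p = π q) → ¬ P π) :
    ∃ (T : Trigraph V) (π : V → V) (u v : V), T.RedDegLE d ∧
      T.Represents H (contractMap u v ∘ π) ∧ P π ∧ ¬ P (contractMap u v ∘ π) := by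
  by_contra hno
  obtain ⟨f, hf, hc, hd⟩ := hH
  set N := H.toTrigraph.verts.card
  have hN : 1 ≤ N := by
    by_contra h
    have hNV : N = Fintype.card V := Finset.card_univ
    have : IsEmpty V := Fintype.card_eq_zero_iff.mp (by omega)
    exact h_const id isEmptyElim h_id
  have hstage : ∀ i, 1 ≤ i → i ≤ N → ∃ π, (f i).Represents H π ∧ P π ∧ (f i).verts.card = i := by
    intro i hi₁ hi₂
    refine Nat.decreasingInduction' (fun k hk hik ⟨π, hπ, hPπ, hcard⟩ => ?_) hi₂
      ⟨id, hf ▸ represents_toTrigraph H, h_id, by rw [hf]⟩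
    obtain ⟨u, v, huv⟩ := hc k (hi₁.trans hik) hk
    refine ⟨_, hπ.contract huv, ?_, ?_⟩
    · by_contra hP'
      exact hno ⟨f k, π, u, v, hd k (hi₁.trans hik) hk.le, hπ.contract huv, hPπ, hP'⟩
    · rw [huv.2.2.2.1, Finset.card_erase_of_mem huv.2.1, hcard, Nat.add_sub_cancel]
  obtain ⟨π, hπ, hPπ, hcard⟩ := hstage 1 le_rfl hN
  exact h_const π (fun p q =>
    Finset.card_le_one.mp hcard.le _ (hπ.mem_verts p) _ (hπ.mem_verts q)) hPπ

theorem RedDegLE.card_image_le {T : Trigraph V} {d : ℕ} (hT : T.RedDegLE d) {A : Type*}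
    (C : Finset A) (φ ψ : A → V)
    (hred : ∀ c ∈ C, ∀ c' ∈ C, c ≠ c' → φ c = φ c' → ψ c ≠ φ c → T.red (φ c) (ψ c)) :
    (C.image ψ).card ≤ (d + 1) * (C.image φ).card := by
  have hsub : C.image ψ ⊆ (C.image φ).biUnion fun Y => (C.filter (φ · = Y)).image ψ := by
    intro z hz
    obtain ⟨c, hc, rfl⟩ := Finset.mem_image.mp hz
    simp only [Finset.mem_biUnion, Finset.mem_image, Finset.mem_filter]
    exact ⟨φ c, ⟨c, hc, rfl⟩, c, ⟨hc, rfl⟩, rfl⟩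
  refine (Finset.card_le_card hsub).trans ((Finset.card_biUnion_le_card_mul _ _ _ ?_).trans_eq
    (mul_comm _ _))
  intro Y _
  set F := C.filter (φ · = Y)
  rcases le_or_gt F.card 1 with hF | hF
  · exact Finset.card_image_le.trans (by omega)
  -- two distinct members of the fibre `F` make every other `ψ`-value over it red to `Y`
  have hY : ∀ z ∈ (F.image ψ).erase Y, T.red Y z := by
    intro z hz
    obtain ⟨hzY, hz⟩ := Finset.mem_erase.mp hz
    obtain ⟨c, hc, rfl⟩ := Finset.mem_image.mp hz
    obtain ⟨c', hc', hcc'⟩ := Finset.exists_mem_ne hF c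
    rw [Finset.mem_filter] at hc hc'
    rw [← hc.2] at hzY ⊢
    exact hred c hc.1 c' hc'.1 hcc'.symm (hc.2.trans hc'.2.symm) hzY
  have := hT.card_le_of_forall_red hY
  have := (F.image ψ).pred_card_le_card_erase (a := Y)
  omega

theorem Represents.card_image_path_le {W : Type*} {T : Trigraph V} {H : SimpleGraph W}
    {π : W → V} {d : ℕ} (hT : T.Represents H π) (hd : T.RedDegLE d) {A : Type*}
    (C : Finset A) (P : A → ℕ → W) (k : ℕ)
    (hadj : ∀ c ∈ C, ∀ j < k, H.Adj (P c j) (P c (j + 1)))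
    (hnadj : ∀ c ∈ C, ∀ c' ∈ C, c ≠ c' → ∀ j < k, ¬ H.Adj (P c' j) (P c (j + 1))) :
    (C.image fun c => π (P c k)).card ≤ (d + 1) ^ k * (C.image fun c => π (P c 0)).card := by
  induction k with
  | zero => simp
  | succ k ih =>
    calc (C.image fun c => π (P c (k + 1))).card
        ≤ (d + 1) * (C.image fun c => π (P c k)).card :=
          hd.card_image_le C _ _ fun c hc c' hc' hcc' hφ hψ =>
            hT.red_of_adj_of_not_adj hφ.symm rfl (Ne.symm hψ) (hadj c hc k k.lt_succ_self)
              (hnadj c hc c' hc' hcc' k k.lt_succ_self)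
      _ ≤ (d + 1) * ((d + 1) ^ k * (C.image fun c => π (P c 0)).card) :=
          Nat.mul_le_mul_left _ (ih (fun c hc j hj => hadj c hc j (by omega))
            (fun c hc c' hc' hcc' j hj => hnadj c hc c' hc' hcc' j (by omega)))
      _ = (d + 1) ^ (k + 1) * (C.image fun c => π (P c 0)).card := by ring

end Contraction

end Trigraph

namespace SubdivVert

variable {n k : ℕ}

/-- The `j`-th vertex on the path from `a` (`j = 0`) to `c` (`j = k + 1`) subdividing the edge
`ac`; junk if `a = c`. -/
def pathVertex (a c : Fin n) (j : ℕ) : SubdivVert n k :=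
  if _ : j = 0 then (Sum.inl a : SubdivVert n k)
  else if _ : k + 1 ≤ j then Sum.inl c
  else if h : a < c then Sum.inr (⟨(a, c), h⟩, ⟨j - 1, by omega⟩)
  else if h' : c < a then Sum.inr (⟨(c, a), h'⟩, ⟨k - j, by omega⟩)
  else Sum.inl a

theorem pathVertex_zero (a c : Fin n) : pathVertex (k := k) a c 0 = Sum.inl a := rfl

theorem pathVertex_of_le (a c : Fin n) {j : ℕ} (hj : k + 1 ≤ j) :
    pathVertex (k := k) a c j = Sum.inl c :=
  (dif_neg (show j ≠ 0 by omega)).trans (dif_pos hj)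

theorem pathVertex_of_lt {a c : Fin n} (h : a < c) {j : ℕ} (hj₁ : 1 ≤ j) (hj₂ : j ≤ k) :
    pathVertex a c j = Sum.inr (⟨(a, c), h⟩, (⟨j - 1, by omega⟩ : Fin k)) :=
  (dif_neg (show j ≠ 0 by omega)).trans <| (dif_neg (show ¬k + 1 ≤ j by omega)).trans (dif_pos h)

theorem pathVertex_of_gt {a c : Fin n} (h : c < a) {j : ℕ} (hj₁ : 1 ≤ j) (hj₂ : j ≤ k) :
    pathVertex a c j = Sum.inr (⟨(c, a), h⟩, (⟨k - j, by omega⟩ : Fin k)) :=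
  (dif_neg (show j ≠ 0 by omega)).trans <| (dif_neg (show ¬k + 1 ≤ j by omega)).trans <|
    (dif_neg h.asymm).trans (dif_pos h)

theorem pathVertex_ne_inl {a c : Fin n} (hac : a ≠ c) {j : ℕ} (hj₁ : 1 ≤ j) (hj₂ : j ≤ k)
    (z : Fin n) : pathVertex (k := k) a c j ≠ Sum.inl z := by
  rcases hac.lt_or_gt with h | h
  · rw [pathVertex_of_lt h hj₁ hj₂]; nofun
  · rw [pathVertex_of_gt h hj₁ hj₂]; nofun

theorem adj_pathVertex_succ {a c : Fin n} (hac : a ≠ c) {j : ℕ} (hj : j ≤ k) :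
    (cliqueSubdivision n k).Adj (pathVertex a c j) (pathVertex a c (j + 1)) := by
  show subAdj n k _ _
  rcases hac.lt_or_gt with h | h <;> rcases Nat.eq_zero_or_pos j with rfl | hj₀ <;>
    rcases hj.lt_or_eq with hjk | rfl <;>
    simp (disch := omega) [pathVertex_zero, pathVertex_of_le, pathVertex_of_lt h,
      pathVertex_of_gt h, subAdj] <;> omega

theorem not_adj_pathVertex {a c c' : Fin n} (hac : a ≠ c) (hac' : a ≠ c') (hcc' : c ≠ c')
    {j : ℕ} (hj₁ : 1 ≤ j) (hj₂ : j ≤ k) :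
    ¬ (cliqueSubdivision n k).Adj (pathVertex a c' j) (pathVertex a c (j + 1)) := by
  show ¬ subAdj n k _ _
  rcases hac.lt_or_gt with h | h <;> rcases hac'.lt_or_gt with h' | h' <;>
    rcases hj₂.lt_or_eq with hjk | rfl <;>
    simp (disch := omega) [pathVertex_of_le, pathVertex_of_lt h, pathVertex_of_gt h,
      pathVertex_of_lt h', pathVertex_of_gt h', subAdj] <;> grind

theorem eq_of_adj_pathVertex_one (hk : 1 ≤ k) {a c : Fin n} (hac : a ≠ c) {w : SubdivVert n k}
    (hw : (cliqueSubdivision n k).Adj w (pathVertex a c 1)) :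
    w = Sum.inl a ∨ w = pathVertex a c 2 := by
  change subAdj n k _ _ at hw
  rcases hac.lt_or_gt with h | h <;> rcases hk.lt_or_eq with hk' | rfl <;>
    rcases w with b | ⟨e, m⟩ <;>
    simp (disch := omega) [pathVertex_of_le, pathVertex_of_lt h, pathVertex_of_gt h,
      subAdj] at hw ⊢ <;> grind

theorem pathVertex_inj {a c c' : Fin n} (hac : a ≠ c) (hac' : a ≠ c') {j j' : ℕ}
    (hj₁ : 1 ≤ j) (hj₂ : j ≤ k + 1) (hj₁' : 1 ≤ j') (hj₂' : j' ≤ k + 1)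
    (h : pathVertex (k := k) a c j = pathVertex a c' j') : c = c' ∧ j = j' := by
  rcases hac.lt_or_gt with hc | hc <;> rcases hac'.lt_or_gt with hc' | hc' <;>
    rcases hj₂.lt_or_eq with hj | rfl <;> rcases hj₂'.lt_or_eq with hj' | rfl <;>
    simp (disch := omega) [pathVertex_of_le, pathVertex_of_lt hc, pathVertex_of_gt hc,
      pathVertex_of_lt hc', pathVertex_of_gt hc'] at h <;> grind

open Trigraph

variable {d : ℕ} {T : Trigraph (SubdivVert n k)} {σ : SubdivVert n k → SubdivVert n k}

theorem card_le_pow_mul_card_image (hT : T.Represents (cliqueSubdivision n k) σ)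
    (hd : T.RedDegLE d) (a : Fin n) {C : Finset (Fin n)} (haC : a ∉ C)
    (hinj : Set.InjOn (fun c => σ (Sum.inl c)) C) :
    C.card ≤ (d + 1) ^ k * (C.image fun c => σ (pathVertex a c 1)).card := by
  have hne : ∀ c ∈ C, a ≠ c := fun c hc hac => haC (hac ▸ hc)
  have hpath := hT.card_image_path_le hd C (fun c j => pathVertex a c (j + 1)) k
    (fun c hc j hj => adj_pathVertex_succ (hne c hc) hj)
    (fun c hc c' hc' hcc' j hj => not_adj_pathVertex (hne c hc) (hne c' hc') hcc' (by omega) hj)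
  simp only [zero_add, pathVertex_of_le _ _ le_rfl] at hpath
  rwa [Finset.card_image_of_injOn hinj] at hpath

theorem red_pathVertex_one (hT : T.Represents (cliqueSubdivision n k) σ) {a c : Fin n}
    (hac : a ≠ c) {w : SubdivVert n k} (hw : σ w = σ (Sum.inl a))
    (hnadj : ¬ (cliqueSubdivision n k).Adj w (pathVertex a c 1))
    (hne : σ (pathVertex a c 1) ≠ σ (Sum.inl a)) :
    T.red (σ (Sum.inl a)) (σ (pathVertex a c 1)) :=
  hT.red_of_adj_of_not_adj hw rfl hne.symm (adj_pathVertex_succ hac (Nat.zero_le k)) hnadj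

theorem sub_one_le_of_forall_red (hT : T.Represents (cliqueSubdivision n k) σ)
    (hd : T.RedDegLE d) {a c₀ : Fin n} (hinj : Set.InjOn (fun c => σ (Sum.inl c)) {c | c ≠ a})
    {w : SubdivVert n k} (hw : σ w = σ (Sum.inl a))
    (h : ∀ c, c ≠ a → c ≠ c₀ → σ (pathVertex a c 1) ≠ σ (Sum.inl a) ∧
      ¬ (cliqueSubdivision n k).Adj w (pathVertex a c 1)) :
    n - 1 ≤ (d + 1) ^ (k + 1) := by
  set C := (Finset.univ.erase a).erase c₀
  have hC : ∀ c ∈ C, c ≠ a ∧ c ≠ c₀ := fun c hc => by simp_all [C]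
  have hred : ∀ y ∈ C.image fun c => σ (pathVertex a c 1), T.red (σ (Sum.inl a)) y := by
    simp only [Finset.mem_image, forall_exists_index, and_imp, forall_apply_eq_imp_iff₂]
    intro c hc
    obtain ⟨hne, hnadj⟩ := h c (hC c hc).1 (hC c hc).2
    exact red_pathVertex_one hT (hC c hc).1.symm hw hnadj hne
  have hcard : n - 2 ≤ C.card := by
    have := (Finset.univ.erase a).pred_card_le_card_erase (a := c₀)
    rw [Finset.card_erase_of_mem (Finset.mem_univ a), Finset.card_univ, Fintype.card_fin] at this
    omega
  have hbound : n - 2 ≤ (d + 1) ^ k * d := calc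
    n - 2 ≤ C.card := hcard
    _ ≤ (d + 1) ^ k * (C.image fun c => σ (pathVertex a c 1)).card :=
      card_le_pow_mul_card_image hT hd a (fun ha => (hC a ha).1 rfl)
        (hinj.mono fun c hc => (hC c hc).1)
    _ ≤ (d + 1) ^ k * d := Nat.mul_le_mul_left _ (hd.card_le_of_forall_red hred)
  calc n - 1 ≤ (d + 1) ^ k * d + 1 := by omega
    _ ≤ (d + 1) ^ k * d + (d + 1) ^ k :=
      Nat.add_le_add_left (Nat.one_le_pow _ _ d.succ_pos) _
    _ = (d + 1) ^ (k + 1) := by ring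

theorem sub_one_le_of_forall_exists (hT : T.Represents (cliqueSubdivision n k) σ)
    (hd : T.RedDegLE d) {a : Fin n} (hinj : Set.InjOn (fun c => σ (Sum.inl c)) {c | c ≠ a})
    (h : ∀ c, c ≠ a → ∃ w, σ w = σ (Sum.inl a) ∧
      ¬ (cliqueSubdivision n k).Adj w (pathVertex a c 1)) :
    n - 1 ≤ (d + 1) ^ (k + 1) := by
  set C := Finset.univ.erase a
  set B := C.image fun c => σ (pathVertex a c 1)
  have hred : ∀ y ∈ B.erase (σ (Sum.inl a)), T.red (σ (Sum.inl a)) y := by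
    simp only [B, Finset.mem_erase, Finset.mem_image, and_imp, forall_exists_index]
    rintro _ hne c hc rfl
    obtain ⟨w, hw, hnadj⟩ := h c (Finset.ne_of_mem_erase hc)
    exact red_pathVertex_one hT (Finset.ne_of_mem_erase hc).symm hw hnadj hne
  have hB : B.card ≤ d + 1 := by
    have := hd.card_le_of_forall_red hred
    have := B.pred_card_le_card_erase (a := σ (Sum.inl a))
    omega
  calc n - 1 = C.card := by simp [C]
    _ ≤ (d + 1) ^ k * B.card :=
      card_le_pow_mul_card_image hT hd a (Finset.notMem_erase a _)
        (hinj.mono fun c hc => Finset.ne_of_mem_erase hc)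
    _ ≤ (d + 1) ^ (k + 1) := by rw [pow_succ]; exact Nat.mul_le_mul_left _ hB

def BranchesIsolated (π : SubdivVert n k → SubdivVert n k) : Prop :=
  ∀ (c : Fin n) p, π p = π (Sum.inl c) → p = Sum.inl c

theorem BranchesIsolated.injOn_contractMap {π : SubdivVert n k → SubdivVert n k}
    (hπ : BranchesIsolated π) {u v p₀ : SubdivVert n k} {a : Fin n} (hp₀ : p₀ ≠ Sum.inl a)
    (hp₀a : contractMap u v (π p₀) = contractMap u v (π (Sum.inl a))) :
    Set.InjOn (fun c => contractMap u v (π (Sum.inl c))) {c | c ≠ a} := by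
  intro c hc c' hc' h
  simp only [contractMap_eq_contractMap_iff, Set.mem_ofPred_eq] at hp₀a h hc hc'
  have := hπ a p₀; have := hπ a (Sum.inl c); have := hπ a (Sum.inl c'); have := hπ c' (Sum.inl c)
  grind

theorem sub_one_le_of_not_branchesIsolated (hk : 1 ≤ k) {π : SubdivVert n k → SubdivVert n k}
    {u v : SubdivVert n k} (hT : T.Represents (cliqueSubdivision n k) (contractMap u v ∘ π))
    (hd : T.RedDegLE d) (hπ : BranchesIsolated π)
    (hσ : ¬ BranchesIsolated (contractMap u v ∘ π)) :
    n - 1 ≤ (d + 1) ^ (k + 1) := by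
  set σ := contractMap u v ∘ π
  obtain ⟨a, p₀, hp₀a, hp₀⟩ : ∃ (a : Fin n) (p₀ : SubdivVert n k),
      σ p₀ = σ (Sum.inl a) ∧ p₀ ≠ Sum.inl a := by
    simpa [BranchesIsolated] using hσ
  have hinj := hπ.injOn_contractMap hp₀ hp₀a
  by_cases hpair : ∃ c₀, c₀ ≠ a ∧
      ∀ w, σ w = σ (Sum.inl a) → w = Sum.inl a ∨ w = pathVertex a c₀ 2
  · obtain ⟨c₀, hc₀, hpair⟩ := hpair
    have hp₀c₀ : p₀ = pathVertex a c₀ 2 := (hpair p₀ hp₀a).resolve_left hp₀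
    refine sub_one_le_of_forall_red hT hd hinj hp₀a (c₀ := c₀) fun c hca hcc₀ =>
      ⟨fun h => ?_, fun h => ?_⟩
    · rcases hpair _ h with h | h
      · exact pathVertex_ne_inl hca.symm le_rfl hk a h
      · exact absurd (pathVertex_inj hca.symm hc₀.symm le_rfl (by omega) (by omega) (by omega) h).2
          (by omega)
    · rcases eq_of_adj_pathVertex_one hk hca.symm h with h | h
      · exact hp₀ h
      · exact hcc₀ (pathVertex_inj hca.symm hc₀.symm (by omega) (by omega) (by omega) (by omega)
          (h.symm.trans hp₀c₀)).1
  · push Not at hpair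
    refine sub_one_le_of_forall_exists hT hd hinj fun c hca => ?_
    obtain ⟨w, hw, hwa, hwc⟩ := hpair c hca
    exact ⟨w, hw, fun hadj => (eq_of_adj_pathVertex_one hk hca.symm hadj).elim hwa hwc⟩

end SubdivVert

/-- if the `k`-subdivision of `K_n` (with `k ≥ 1`, `n ≥ 2`) has twin-width at
most `d`, then `(d+1)^(k+1) ≥ n - 1`. -/
theorem clique_subdivision_lower_bound (d k n : ℕ) (hk : 1 ≤ k) (hn : 2 ≤ n)
    (h : Trigraph.tww (cliqueSubdivision n k).toTrigraph ≤ d) :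
    n - 1 ≤ (d + 1) ^ (k + 1) := by
  have h_const : ∀ π : SubdivVert n k → SubdivVert n k, (∀ p q, π p = π q) →
      ¬ SubdivVert.BranchesIsolated π := fun π hπ hiso =>
    absurd (congrArg Fin.val (Sum.inl_injective (hiso ⟨0, by omega⟩ (Sum.inl ⟨1, by omega⟩)
      (hπ _ _)))) one_ne_zero
  obtain ⟨T, π, u, v, hd, hT, hπ, hσ⟩ := (Trigraph.HasSeq.of_tww_le h).exists_critical_contraction
    SubdivVert.BranchesIsolated (fun _ _ => id) h_const
  exact SubdivVert.sub_one_le_of_not_branchesIsolated hk hT hd hπ hσ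
end
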